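/- With Q a family of subgroups satisfying (para 0.2) and (para 0.4), and I = (G × A)/∼ the resulting quotient with G acting by g'·[g,a] = [g'g, a], the canonical map ι : A → I, a ↦ [1,a] is injective if and only if for every a ∈ A, Q(a) ∩ N = Fix_N(a) (condition (para inj)). -/

import Mathlib

/-! Since `Q` is `N`-equivariant, `∼` is an equivalence relation, so `[1, a] = [1, b]` holds iff
`b = n • a` for some `n ∈ Q(a) ∩ N`. Injectivity of `ι` therefore says exactly that every such `n`
fixes `a`. -/

/-- The relation defining the hovel as a quotient of G × A. -/
def hovelRel {G A : Type*} [Group G] (N : Subgroup G) [MulAction N A]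
    (Q : A → Subgroup G) : G × A → G × A → Prop :=
  fun p q => ∃ n : N, q.2 = n • p.2 ∧ p.1⁻¹ * q.1 * (n : G) ∈ Q p.2

namespace hovelRel

variable {G A : Type*} [Group G] {N : Subgroup G} [MulAction N A] {Q : A → Subgroup G}

section Equivariant

variable (hQ : ∀ (m : N) (a : A),
  (fun x => (m : G) * x * (m : G)⁻¹) '' (Q a : Set G) = (Q (m • a) : Set G))
include hQ

theorem conj_mem_smul {m : N} {a : A} {x : G} (hx : x ∈ Q a) :
    (m : G) * x * (m : G)⁻¹ ∈ Q (m • a) := by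
  rw [← SetLike.mem_coe, ← hQ]
  exact ⟨x, hx, rfl⟩

theorem inv_conj_mem_of_mem_smul {n : N} {a : A} {x : G} (hx : x ∈ Q (n • a)) :
    (n : G)⁻¹ * x * n ∈ Q a := by
  simpa using conj_mem_smul hQ (m := n⁻¹) hx

theorem symm {p q : G × A} : hovelRel N Q p q → hovelRel N Q q p := by
  rintro ⟨n, hq2, hmem⟩
  refine ⟨n⁻¹, by rw [hq2, inv_smul_smul], ?_⟩
  have h := conj_mem_smul hQ (m := n) (inv_mem hmem)
  rw [← hq2] at h
  convert h using 1
  push_cast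
  group

theorem trans {p q r : G × A} :
    hovelRel N Q p q → hovelRel N Q q r → hovelRel N Q p r := by
  rintro ⟨n, hq2, hpq⟩ ⟨m, hr2, hqr⟩
  refine ⟨m * n, by rw [hr2, hq2, mul_smul], ?_⟩
  rw [hq2] at hqr
  -- with p = (g, a), q = (h, n • a), r = (k, _): g⁻¹ k (m n) = (g⁻¹ h n) · n⁻¹ (h⁻¹ k m) n
  convert mul_mem hpq (inv_conj_mem_of_mem_smul hQ hqr) using 1
  push_cast
  group

theorem equivalence : Equivalence (hovelRel N Q) where
  refl p := ⟨1, (one_smul N p.2).symm, by simp⟩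
  symm := symm hQ
  trans := trans hQ

theorem mk_one_eq_mk_one_iff {a b : A} :
    Quot.mk (hovelRel N Q) ((1 : G), a) = Quot.mk (hovelRel N Q) ((1 : G), b) ↔
      ∃ n : N, b = n • a ∧ (n : G) ∈ Q a := by
  rw [Quot.eq, (equivalence hQ).eqvGen_iff]
  simp [hovelRel]

end Equivariant

end hovelRel

/-- The canonical map A → I = (G × A)/∼, a ↦ [1,a], is injective iff
Q(a) ∩ N = Fix_N(a) for all a (condition (para inj)). -/
theorem hovel_injectivity_iff {G A : Type*} [Group G]
    (N : Subgroup G) [MulAction N A] (Q : A → Subgroup G)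
    (h02 : ∀ (a : A) (m : N), m • a = a → (m : G) ∈ Q a)
    (h04 : ∀ (m : N) (a : A),
      (fun x => (m : G) * x * (m : G)⁻¹) '' (Q a : Set G) = (Q (m • a) : Set G)) :
    Function.Injective (fun a : A => Quot.mk (hovelRel N Q) ((1 : G), a)) ↔
      ∀ a : A, {m : N | (m : G) ∈ Q a} = {m : N | m • a = a} := by
  simp only [Function.Injective, hovelRel.mk_one_eq_mk_one_iff h04, Set.ext_iff,
    Set.mem_ofPred_eq]
  constructor
  · intro hinj a m
    exact ⟨fun hm => (hinj ⟨m, rfl, hm⟩).symm, h02 a m⟩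
  · rintro hfix a _ ⟨n, rfl, hn⟩
    exact ((hfix a n).mp hn).symm
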